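/- arXiv:1107.3880 — 4 statements merged into one kernel-verified Lean document; each statement's English description precedes it below -/
import Mathlib

section
/- For a sequence of pairwise distinct real numbers indexed by ℤ such that the set of local maximum points is unbounded above and below, between any two consecutive local maximum points there is exactly one local minimum point. -/
/-- For a sequence of pairwise distinct reals indexed by `ℤ` whose set of local maximum
points is unbounded above and below, between any two consecutive local maximum points
there is exactly one local minimum point. -/
theorem unique_local_min_between_consecutive_maxima
    (x : ℤ → ℝ) (hdist : Function.Injective x)
    (hub : ∀ N : ℤ, ∃ n : ℤ, N < n ∧ x (n - 1) < x n ∧ x (n + 1) < x n)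
    (hlb : ∀ N : ℤ, ∃ n : ℤ, n < N ∧ x (n - 1) < x n ∧ x (n + 1) < x n)
    (m n : ℤ) (hmn : m < n)
    (hm : x (m - 1) < x m ∧ x (m + 1) < x m)
    (hn : x (n - 1) < x n ∧ x (n + 1) < x n)
    (hcons : ∀ k : ℤ, m < k → k < n → ¬(x (k - 1) < x k ∧ x (k + 1) < x k)) :
    ∃! k : ℤ, m < k ∧ k < n ∧ x k < x (k - 1) ∧ x k < x (k + 1) := by
  obtain ⟨hm1, hm2⟩ := hm
  obtain ⟨hn1, hn2⟩ := hn
  -- existence: take the minimum of x over Icc m n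
  have hne : (Finset.Icc m n).Nonempty := ⟨m, Finset.mem_Icc.mpr ⟨le_refl m, le_of_lt hmn⟩⟩
  obtain ⟨k, hk, hkmin⟩ := Finset.exists_min_image (Finset.Icc m n) x hne
  rw [Finset.mem_Icc] at hk
  have hkm : m < k := by
    rcases lt_or_eq_of_le hk.1 with h | h
    · exact h
    · exfalso
      have h1 : x k ≤ x (m + 1) := hkmin (m + 1) (Finset.mem_Icc.mpr ⟨by omega, by omega⟩)
      rw [← h] at h1
      linarith
  have hkn : k < n := by
    rcases lt_or_eq_of_le hk.2 with h | h
    · exact h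
    · exfalso
      have h1 : x k ≤ x (n - 1) := hkmin (n - 1) (Finset.mem_Icc.mpr ⟨by omega, by omega⟩)
      rw [h] at h1
      linarith
  have hstrict : ∀ a b : ℤ, a ≠ b → x a ≤ x b → x a < x b := by
    intro a b hab h
    rcases lt_or_eq_of_le h with h | h
    · exact h
    · exact absurd (hdist h) hab
  have hkl : x k < x (k - 1) :=
    hstrict k (k - 1) (by omega)
      (hkmin (k - 1) (Finset.mem_Icc.mpr ⟨by omega, by omega⟩))
  have hkr : x k < x (k + 1) :=
    hstrict k (k + 1) (by omega)
      (hkmin (k + 1) (Finset.mem_Icc.mpr ⟨by omega, by omega⟩))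
  -- no two distinct local minima in (m, n)
  have key : ∀ a b : ℤ, a < b → m < a → b < n →
      (x a < x (a - 1) ∧ x a < x (a + 1)) → (x b < x (b - 1) ∧ x b < x (b + 1)) → False := by
    intro a b hab hma hbn ha hb
    have hne2 : (Finset.Icc a b).Nonempty := ⟨a, Finset.mem_Icc.mpr ⟨le_refl a, le_of_lt hab⟩⟩
    obtain ⟨j, hj, hjmax⟩ := Finset.exists_max_image (Finset.Icc a b) x hne2
    rw [Finset.mem_Icc] at hj
    have hja : a < j := by
      rcases lt_or_eq_of_le hj.1 with h | h
      · exact h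
      · exfalso
        have h1 : x (a + 1) ≤ x j := hjmax (a + 1) (Finset.mem_Icc.mpr ⟨by omega, by omega⟩)
        rw [← h] at h1
        linarith [ha.2]
    have hjb : j < b := by
      rcases lt_or_eq_of_le hj.2 with h | h
      · exact h
      · exfalso
        have h1 : x (b - 1) ≤ x j := hjmax (b - 1) (Finset.mem_Icc.mpr ⟨by omega, by omega⟩)
        rw [h] at h1
        linarith [hb.1]
    refine hcons j (by omega) (by omega) ⟨?_, ?_⟩
    · exact hstrict (j - 1) j (by omega)
        (hjmax (j - 1) (Finset.mem_Icc.mpr ⟨by omega, by omega⟩))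
    · exact hstrict (j + 1) j (by omega)
        (hjmax (j + 1) (Finset.mem_Icc.mpr ⟨by omega, by omega⟩))
  refine ⟨k, ⟨hkm, hkn, hkl, hkr⟩, ?_⟩
  rintro y ⟨hym, hyn, hyl, hyr⟩
  rcases lt_trichotomy y k with h | h | h
  · exact absurd (key y k h hym hkn ⟨hyl, hyr⟩ ⟨hkl, hkr⟩) id
  · exact h
  · exact absurd (key k y h hkm hyn ⟨hkl, hkr⟩ ⟨hyl, hyr⟩) id
end

section
/- Let x_0 < x_1 < ... be the successive local maximum points (in increasing order) of an i.i.d. sequence with continuous distribution function, conditioned on 0 being a local maximum point, and let τ_k denote the distance between consecutive alternating extrema starting from 0 (τ_1 = distance from 0 to the next local minimum point, τ_2 = distance from that minimum to the next local maximum point, etc.). Then E[τ_1] = 3/2. -/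
/-!
Given a local maximum at `0` and no ties (a null event), the first local minimum `τ` exceeds `n`
exactly when `X 0 > X 1 > ⋯ > X (n + 1)`. By exchangeability every ordering of `m + 1` values is
equally likely, so a descending run of length `m` has probability `1 / (m + 1)!`; splitting on the
order of `X (-1)` and `X 0` gives `P(X (-1) < X 0 > ⋯ > X (n + 1)) = 1 / (n + 2)! - 1 / (n + 3)!`.
These telescope to `∑ₙ P(local max at 0, τ > n) = 1 / 2`, while the local maximum itself has
probability `1 / 3`, whence `E[τ | local max at 0] = 3 / 2`.
-/

open MeasureTheory ProbabilityTheory Set Function Filter Topology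
open scoped ENNReal Nat

lemma Nat.lt_sInf_iff {s : Set ℕ} {n : ℕ} :
    n < sInf s ↔ s.Nonempty ∧ ∀ j < n + 1, j ∉ s := by
  refine ⟨fun h => ⟨Nat.nonempty_of_pos_sInf (by omega),
    fun j hj => Nat.notMem_of_lt_sInf (by omega)⟩, fun ⟨hs, h⟩ => ?_⟩
  by_contra! hle
  exact h _ (by omega) (Nat.sInf_mem hs)

lemma ENNReal.tsum_eq_of_add_succ_eq {a b : ℕ → ℝ≥0∞} (h : ∀ n, a n + b (n + 1) = b n)
    (hb0 : b 0 ≠ ∞) (hb : Tendsto b atTop (𝓝 0)) : ∑' n, a n = b 0 := by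
  have hpartial (N : ℕ) : ∑ n ∈ Finset.range N, a n + b N = b 0 := by
    induction N with
    | zero => simp
    | succ N ih => rw [Finset.sum_range_succ, add_assoc, h, ih]
  have hpartial' (N : ℕ) : ∑ n ∈ Finset.range N, a n = b 0 - b N :=
    ENNReal.eq_sub_of_add_eq (ne_top_of_le_ne_top hb0 (hpartial N ▸ le_add_self)) (hpartial N)
  refine ((ENNReal.hasSum_iff_tendsto_nat _).mpr ?_).tsum_eq
  simpa [hpartial'] using ENNReal.Tendsto.sub tendsto_const_nhds hb (.inl hb0)

lemma ENNReal.tendsto_inv_factorial_atTop :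
    Tendsto (fun n : ℕ => ((n ! : ℕ) : ℝ≥0∞)⁻¹) atTop (𝓝 0) :=
  ENNReal.tendsto_inv_nat_nhds_zero.comp (tendsto_atTop_mono Nat.self_le_factorial tendsto_id)

lemma MeasureTheory.lintegral_natCast_eq_tsum_measure_lt {α : Type*} [MeasurableSpace α]
    (μ : Measure α) {f : α → ℕ} (hf : Measurable f) :
    ∫⁻ a, (f a : ℝ≥0∞) ∂μ = ∑' n : ℕ, μ {a | n < f a} := by
  have hmeas (n : ℕ) : MeasurableSet {a | n < f a} := hf measurableSet_Ioi
  have hcount (a : α) : (f a : ℝ≥0∞) = ∑' n : ℕ, {a | n < f a}.indicator 1 a := by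
    rw [tsum_eq_sum (s := Finset.range (f a)) fun n hn => by simpa using hn]
    simp [Set.indicator_apply, Finset.filter_true_of_mem fun x hx => Finset.mem_range.mp hx]
  simp_rw [hcount]
  rw [lintegral_tsum fun n => (measurable_one.indicator (hmeas n)).aemeasurable]
  simp [lintegral_indicator_one (hmeas _)]

lemma integral_cond_natCast_eq_tsum {α : Type*} [MeasurableSpace α] {μ : Measure α}
    {s : Set α} (hs : MeasurableSet s) {f : α → ℕ} (hf : Measurable f) :
    ∫ a, (f a : ℝ) ∂μ[|s] =
      ((μ s)⁻¹ * ∑' n : ℕ, μ (s ∩ {a | n < f a})).toReal := by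
  rw [integral_eq_lintegral_of_nonneg_ae (ae_of_all _ fun a => Nat.cast_nonneg _)
    (measurable_from_nat.comp hf).aestronglyMeasurable]
  simp_rw [ENNReal.ofReal_natCast]
  rw [lintegral_natCast_eq_tsum_measure_lt _ hf]
  simp_rw [cond_apply hs, ENNReal.tsum_mul_left]

lemma nullSingletonClass_of_continuous_cdf {μ : Measure ℝ} [IsProbabilityMeasure μ]
    (hcont : Continuous (cdf μ)) : NullSingletonClass μ where
  measure_singleton x := by
    rw [← measure_cdf μ, StieltjesFunction.measure_singleton,
      leftLim_eq_of_tendsto ((hcont.tendsto x).mono_left nhdsWithin_le_nhds), sub_self,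
      ENNReal.ofReal_zero]

lemma measurableSet_setOf_strictMono {m : ℕ} :
    MeasurableSet {f : Fin m → ℝ | StrictMono f} := by
  simp only [StrictMono, ofPred_forall]
  exact .iInter fun i => .iInter fun j => .iInter fun _ =>
    measurableSet_lt (measurable_pi_apply i) (measurable_pi_apply j)

namespace ProbabilityTheory

variable {Ω : Type*} [MeasurableSpace Ω] {P : Measure Ω} {μ : Measure ℝ}

lemma IndepFun.measure_eq_eq_zero [IsProbabilityMeasure P] {Y Z : Ω → ℝ} (h : IndepFun Y Z P)
    (hY : Measurable Y) (hZ : Measurable Z) [NullSingletonClass (P.map Z)] :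
    P {ω | Y ω = Z ω} = 0 := by
  have hdiag : MeasurableSet {p : ℝ × ℝ | p.1 = p.2} :=
    measurableSet_eq_fun measurable_fst measurable_snd
  have hsec (y : ℝ) : Prod.mk y ⁻¹' {p : ℝ × ℝ | p.1 = p.2} = {y} := by
    ext; simp [eq_comm]
  calc P {ω | Y ω = Z ω} = P.map (fun ω => (Y ω, Z ω)) {p | p.1 = p.2} :=
        (Measure.map_apply (hY.prodMk hZ) hdiag).symm
    _ = 0 := by
        rw [(indepFun_iff_map_prod_eq_prod_map_map hY.aemeasurable hZ.aemeasurable).mp h,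
          Measure.prod_apply hdiag]
        simp [hsec]

lemma iIndepFun.ae_injective {κ : Type*} [Countable κ] {Y : κ → Ω → ℝ}
    (hmeas : ∀ i, Measurable (Y i)) (hindep : iIndepFun Y P) (hlaw : ∀ i, P.map (Y i) = μ)
    [NullSingletonClass μ] : ∀ᵐ ω ∂P, Injective fun i => Y i ω := by
  have := hindep.isProbabilityMeasure
  simp only [Injective, ae_all_iff]
  intro i j
  by_cases hij : i = j
  · exact ae_of_all _ fun _ _ => hij
  have : NullSingletonClass (P.map (Y j)) := hlaw j ▸ ‹_›
  filter_upwards [measure_eq_zero_iff_ae_notMem.mp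
    ((hindep.indepFun hij).measure_eq_eq_zero (hmeas i) (hmeas j))] with ω hω heq
  exact absurd heq hω

variable {m : ℕ} {Y : Fin m → Ω → ℝ}

lemma iIndepFun.measure_strictMono_eq_pi (hmeas : ∀ i, Measurable (Y i))
    (hindep : iIndepFun Y P) (hlaw : ∀ i, P.map (Y i) = μ) :
    P {ω | StrictMono fun i => Y i ω} =
      Measure.pi (fun _ => μ) {f : Fin m → ℝ | StrictMono f} := by
  rw [← funext hlaw, ← hindep.map_fun_eq_pi_map fun i => (hmeas i).aemeasurable,
    Measure.map_apply (measurable_pi_lambda _ hmeas) measurableSet_setOf_strictMono]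
  rfl

/-- Exchangeability: the `m!` orderings of the `Y i` are equally likely, and almost surely
exactly one of them occurs. -/
lemma iIndepFun.measure_strictMono_eq_inv_factorial (hmeas : ∀ i, Measurable (Y i))
    (hindep : iIndepFun Y P) (hlaw : ∀ i, P.map (Y i) = μ) [NullSingletonClass μ] :
    P {ω | StrictMono fun i => Y i ω} = (m ! : ℝ≥0∞)⁻¹ := by
  have := hindep.isProbabilityMeasure
  set B : Equiv.Perm (Fin m) → Set Ω := fun σ => {ω | StrictMono fun i => Y (σ i) ω}
  have hB (σ : Equiv.Perm (Fin m)) : P (B σ) = P {ω | StrictMono fun i => Y i ω} := by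
    rw [(hindep.precomp σ.injective).measure_strictMono_eq_pi (fun i => hmeas _)
      (fun i => hlaw _), hindep.measure_strictMono_eq_pi hmeas hlaw]
  have hBmeas (σ : Equiv.Perm (Fin m)) : MeasurableSet (B σ) :=
    measurable_pi_lambda _ (fun i => hmeas (σ i)) measurableSet_setOf_strictMono
  have hdisj : Pairwise (Disjoint on B) := by
    intro σ τ hστ
    refine Set.disjoint_left.mpr fun ω (hσ : StrictMono _) (hτ : StrictMono _) => hστ ?_
    have hinj : Injective fun i => Y i ω := hσ.injective.of_comp_right σ.surjective
    exact Equiv.ext fun i => hinj <| congrFun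
      (Tuple.unique_monotone (f := fun i => Y i ω) hσ.monotone hτ.monotone) i
  have hcover : ∀ᵐ ω ∂P, ω ∈ ⋃ σ, B σ := by
    filter_upwards [hindep.ae_injective hmeas hlaw] with ω hinj
    exact mem_iUnion.mpr ⟨Tuple.sort _,
      (Tuple.monotone_sort (fun i => Y i ω)).strictMono_of_injective
        (hinj.comp (Tuple.sort _).injective)⟩
  have hsum : (m ! : ℝ≥0∞) * P {ω | StrictMono fun i => Y i ω} = 1 := by
    rw [← (prob_compl_eq_zero_iff (.iUnion hBmeas)).mp (ae_iff.mp hcover),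
      measure_iUnion hdisj hBmeas, tsum_fintype, Finset.sum_congr rfl fun σ _ => hB σ,
      Finset.sum_const, Finset.card_univ, Fintype.card_perm, Fintype.card_fin, nsmul_eq_mul]
  exact ENNReal.eq_inv_of_mul_eq_one_left (by rwa [mul_comm] at hsum)

lemma iIndepFun.measure_strictAnti_eq_inv_factorial (hmeas : ∀ i, Measurable (Y i))
    (hindep : iIndepFun Y P) (hlaw : ∀ i, P.map (Y i) = μ) [NullSingletonClass μ] :
    P {ω | StrictAnti fun i => Y i ω} = (m ! : ℝ≥0∞)⁻¹ := by
  have hrev : {ω | StrictAnti fun i => Y i ω} = {ω | StrictMono fun i => Y (Fin.rev i) ω} := by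
    ext ω
    refine ⟨fun h => h.comp Fin.rev_strictAnti, fun h => ?_⟩
    simpa [Function.comp_def] using h.comp_strictAnti Fin.rev_strictAnti
  rw [hrev]
  exact (hindep.precomp Fin.rev_injective).measure_strictMono_eq_inv_factorial
    (fun _ => hmeas _) (fun _ => hlaw _)

end ProbabilityTheory

def localMinSet (x : ℤ → ℝ) : Set ℕ := {n | 1 ≤ n ∧ x n < x (n - 1) ∧ x n < x (n + 1)}

lemma forall_lt_succ_notMem_localMinSet_iff {x : ℤ → ℝ} (hx : Injective x) (h10 : x 1 < x 0) :
    ∀ n : ℕ, (∀ j < n + 1, j ∉ localMinSet x) ↔ ∀ k < n + 1, x (k + 1) < x k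
  | 0 => by simp [localMinSet, h10]
  | n + 1 => by
    rw [Nat.forall_lt_succ_right, forall_lt_succ_notMem_localMinSet_iff hx h10 n,
      Nat.forall_lt_succ_right (n := n + 1)]
    refine and_congr_right fun hdesc => ?_
    -- `x (n + 1) < x n` already holds, so `n + 1` is no local minimum iff `x (n + 2) ≤ x (n + 1)`
    have hne : x (n + 1 + 1) ≠ x (n + 1) := hx.ne (by omega)
    simp only [localMinSet, mem_ofPred_eq, Nat.cast_add, Nat.cast_one, add_sub_cancel_right,
      hdesc n n.lt_succ_self, true_and, le_add_iff_nonneg_left, zero_le, not_lt]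
    exact ⟨fun h => h.lt_of_ne hne, le_of_lt⟩

lemma localMinSet_nonempty {x : ℤ → ℝ} (hx : Injective x) (h10 : x 1 < x 0)
    (h : ¬ ∀ k : ℕ, x (k + 1) < x k) : (localMinSet x).Nonempty := by
  by_contra hempty
  refine h fun k => (forall_lt_succ_notMem_localMinSet_iff hx h10 k).mp ?_ k k.lt_succ_self
  exact fun j _ hj => hempty ⟨j, hj⟩

section DescendingRuns

variable {Ω : Type*} {X : ℤ → Ω → ℝ}

def descRun (X : ℤ → Ω → ℝ) (a : ℤ) (m : ℕ) : Set Ω :=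
  {ω | ∀ k < m, X (a + k + 1) ω < X (a + k) ω}

lemma descRun_succ (a : ℤ) (m : ℕ) :
    descRun X a (m + 1) = {ω | X (a + 1) ω < X a ω} ∩ descRun X (a + 1) m := by
  ext ω
  simp only [descRun, mem_ofPred_eq, mem_inter_iff, Nat.forall_lt_succ_left]
  push_cast
  simp only [add_zero, add_assoc, add_comm (1 : ℤ)]

lemma descRun_eq_setOf_strictAnti (a : ℤ) (m : ℕ) :
    descRun X a m = {ω | StrictAnti fun i : Fin (m + 1) => X (a + i) ω} := by
  ext ω
  simp only [descRun, mem_ofPred_eq, Fin.strictAnti_iff_succ_lt, Fin.forall_iff,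
    Fin.val_succ, Fin.val_castSucc]
  push_cast
  simp only [add_assoc]

variable [MeasurableSpace Ω] {P : Measure Ω} {μ : Measure ℝ}

lemma measurableSet_descRun (hmeas : ∀ i, Measurable (X i)) (a : ℤ) (m : ℕ) :
    MeasurableSet (descRun X a m) := by
  simp only [descRun, ofPred_forall]
  exact .iInter fun k => .iInter fun _ => measurableSet_lt (hmeas _) (hmeas _)

lemma measure_descRun (hmeas : ∀ i, Measurable (X i)) (hindep : iIndepFun X P)
    (hlaw : ∀ i, P.map (X i) = μ) [NullSingletonClass μ] (a : ℤ) (m : ℕ) :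
    P (descRun X a m) = ((m + 1)! : ℝ≥0∞)⁻¹ := by
  have hinj : Injective fun i : Fin (m + 1) => a + (i : ℤ) := fun i j h => by
    simpa [Fin.ext_iff] using h
  rw [descRun_eq_setOf_strictAnti]
  exact (hindep.precomp hinj).measure_strictAnti_eq_inv_factorial (fun _ => hmeas _)
    (fun _ => hlaw _)

lemma measure_iInter_descRun (hmeas : ∀ i, Measurable (X i)) (hindep : iIndepFun X P)
    (hlaw : ∀ i, P.map (X i) = μ) [NullSingletonClass μ] (a : ℤ) :
    P (⋂ m, descRun X a m) = 0 :=
  le_antisymm (ge_of_tendsto'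
    ((tendsto_add_atTop_iff_nat 1).mpr ENNReal.tendsto_inv_factorial_atTop)
    fun m => (measure_mono (iInter_subset _ m)).trans (measure_descRun hmeas hindep hlaw a m).le)
    zero_le

/-- Up to the null event of a tie, the complementary case `X a < X (a - 1)` is a run of length
`m + 1` from `a - 1`. -/
lemma measure_lt_inter_descRun_add (hmeas : ∀ i, Measurable (X i)) (hindep : iIndepFun X P)
    (hlaw : ∀ i, P.map (X i) = μ) [NullSingletonClass μ] (a : ℤ) (m : ℕ) :
    P ({ω | X (a - 1) ω < X a ω} ∩ descRun X a m) + ((m + 2)! : ℝ≥0∞)⁻¹ =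
      ((m + 1)! : ℝ≥0∞)⁻¹ := by
  have hsplit : descRun X (a - 1) (m + 1) = {ω | X a ω < X (a - 1) ω} ∩ descRun X a m := by
    rw [descRun_succ, sub_add_cancel]
  have hdisj : Disjoint ({ω | X (a - 1) ω < X a ω} ∩ descRun X a m)
      (descRun X (a - 1) (m + 1)) := by
    rw [hsplit]
    exact Set.disjoint_left.mpr fun ω ⟨h, _⟩ ⟨h', _⟩ => lt_asymm (α := ℝ) h h'
  have hunion : (({ω | X (a - 1) ω < X a ω} ∩ descRun X a m) ∪
      descRun X (a - 1) (m + 1) : Set Ω) =ᵐ[P] descRun X a m := by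
    refine eventuallyEq_set.mpr ?_
    filter_upwards [hindep.ae_injective hmeas hlaw] with ω hinj
    rw [hsplit]
    have hne : X (a - 1) ω ≠ X a ω := hinj.ne (by omega)
    simp only [mem_union, mem_inter_iff, mem_ofPred_eq, ← or_and_right, hne.lt_or_gt, true_and]
  rw [← measure_descRun hmeas hindep hlaw (a - 1) (m + 1),
    ← measure_descRun hmeas hindep hlaw a m, ← measure_congr hunion,
    measure_union hdisj (measurableSet_descRun hmeas _ _)]

/-- Infinite descent has probability `lim 1 / m! = 0`; this rules out the junk value
`sInf ∅ = 0` for the first local minimum. -/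
lemma ae_localMinSet_nonempty (hmeas : ∀ i, Measurable (X i)) (hindep : iIndepFun X P)
    (hlaw : ∀ i, P.map (X i) = μ) [NullSingletonClass μ] :
    ∀ᵐ ω ∂P, X 1 ω < X 0 ω → (localMinSet fun i => X i ω).Nonempty := by
  filter_upwards [hindep.ae_injective hmeas hlaw,
    measure_eq_zero_iff_ae_notMem.mp (measure_iInter_descRun hmeas hindep hlaw 0)]
    with ω hinj hrun h10
  exact localMinSet_nonempty hinj h10 fun hdesc =>
    hrun (mem_iInter.mpr fun m k _ => by simpa using hdesc k)

lemma localMax_inter_lt_sInf_localMinSet_ae_eq (hmeas : ∀ i, Measurable (X i))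
    (hindep : iIndepFun X P) (hlaw : ∀ i, P.map (X i) = μ) [NullSingletonClass μ] (n : ℕ) :
    ({ω | X (-1) ω < X 0 ω ∧ X 1 ω < X 0 ω} ∩
      {ω | n < sInf (localMinSet fun i => X i ω)} : Set Ω) =ᵐ[P]
      ({ω | X (-1) ω < X 0 ω} ∩ descRun X 0 (n + 1) : Set Ω) := by
  refine eventuallyEq_set.mpr ?_
  filter_upwards [hindep.ae_injective hmeas hlaw, ae_localMinSet_nonempty hmeas hindep hlaw]
    with ω hinj hne
  simp only [mem_inter_iff, mem_ofPred_eq, descRun, zero_add, Nat.lt_sInf_iff]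
  constructor
  · rintro ⟨⟨h1, h10⟩, -, hmin⟩
    exact ⟨h1, (forall_lt_succ_notMem_localMinSet_iff hinj h10 n).mp hmin⟩
  · rintro ⟨h1, hrun⟩
    have h10 : X 1 ω < X 0 ω := by simpa using hrun 0 n.succ_pos
    exact ⟨⟨h1, h10⟩, hne h10, (forall_lt_succ_notMem_localMinSet_iff hinj h10 n).mpr hrun⟩

lemma measurable_sInf_localMinSet (hmeas : ∀ i, Measurable (X i)) :
    Measurable fun ω => sInf (localMinSet fun i => X i ω) := by
  have hloc (j : ℕ) : MeasurableSet {ω | j ∈ localMinSet fun i => X i ω} :=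
    (MeasurableSet.const _).inter
      ((measurableSet_lt (hmeas _) (hmeas _)).inter (measurableSet_lt (hmeas _) (hmeas _)))
  refine measurable_of_Ioi fun n => ?_
  simp only [preimage, mem_Ioi, Nat.lt_sInf_iff, Set.Nonempty, ofPred_and, ofPred_exists,
    ofPred_forall]
  exact (MeasurableSet.iUnion hloc).inter (.iInter fun j => .iInter fun _ => (hloc j).compl)

lemma measure_localMax (hmeas : ∀ i, Measurable (X i)) (hindep : iIndepFun X P)
    (hlaw : ∀ i, P.map (X i) = μ) [NullSingletonClass μ] :
    P {ω | X (-1) ω < X 0 ω ∧ X 1 ω < X 0 ω} = 3⁻¹ := by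
  have h := measure_lt_inter_descRun_add hmeas hindep hlaw 0 1
  have h36 : (3 : ℝ≥0∞)⁻¹ + 6⁻¹ = 2⁻¹ := by
    rw [← ENNReal.toReal_eq_toReal_iff' (by simp) (by simp),
      ENNReal.toReal_add (by simp) (by simp)]
    norm_num
  have hrun : {ω | X (-1) ω < X 0 ω ∧ X 1 ω < X 0 ω} =
      {ω | X (0 - 1) ω < X 0 ω} ∩ descRun X 0 1 := by
    ext; simp [descRun]
  norm_num [Nat.factorial] at h
  rw [hrun]
  exact (ENNReal.add_left_inj (by simp)).mp (h.trans h36.symm)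

lemma tsum_measure_localMax_inter_lt_sInf_localMinSet (hmeas : ∀ i, Measurable (X i))
    (hindep : iIndepFun X P) (hlaw : ∀ i, P.map (X i) = μ) [NullSingletonClass μ] :
    ∑' n : ℕ, P ({ω | X (-1) ω < X 0 ω ∧ X 1 ω < X 0 ω} ∩
      {ω | n < sInf (localMinSet fun i => X i ω)}) = 2⁻¹ := by
  simp_rw [measure_congr (localMax_inter_lt_sInf_localMinSet_ae_eq hmeas hindep hlaw _)]
  simpa using ENNReal.tsum_eq_of_add_succ_eq
    (fun n => by simpa using measure_lt_inter_descRun_add hmeas hindep hlaw 0 (n + 1))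
    (by simp) ((tendsto_add_atTop_iff_nat 2).mpr ENNReal.tendsto_inv_factorial_atTop)

end DescendingRuns

/-- Conditioned on `0` being a local maximum point of an i.i.d. sequence with continuous
distribution function, the expected position `τ₁` of the first subsequent local minimum
point equals `3/2`. -/
theorem expected_first_local_min_eq_three_halves
    {Ω : Type*} [MeasurableSpace Ω] (P : Measure Ω) [IsProbabilityMeasure P]
    (X : ℤ → Ω → ℝ) (hmeas : ∀ i, Measurable (X i))
    (hindep : iIndepFun X P)
    (hident : ∀ i j : ℤ, IdentDistrib (X i) (X j) P P)
    (hcont : Continuous (cdf (P.map (X 0))))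
    (τ : Ω → ℕ)
    (hτ : ∀ ω, τ ω = sInf {n : ℕ | 1 ≤ n ∧
      X n ω < X ((n : ℤ) - 1) ω ∧ X n ω < X ((n : ℤ) + 1) ω}) :
    ∫ ω, (τ ω : ℝ)
      ∂(ProbabilityTheory.cond P {ω | X (-1) ω < X 0 ω ∧ X 1 ω < X 0 ω}) = 3 / 2 := by
  have : IsProbabilityMeasure (P.map (X 0)) :=
    Measure.isProbabilityMeasure_map (hmeas 0).aemeasurable
  have : NullSingletonClass (P.map (X 0)) := nullSingletonClass_of_continuous_cdf hcont
  have hlaw (i : ℤ) : P.map (X i) = P.map (X 0) := (hident i 0).map_eq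
  obtain rfl : τ = fun ω => sInf (localMinSet fun i => X i ω) := funext hτ
  have hlocalMax : MeasurableSet {ω | X (-1) ω < X 0 ω ∧ X 1 ω < X 0 ω} :=
    (measurableSet_lt (hmeas _) (hmeas _)).inter (measurableSet_lt (hmeas _) (hmeas _))
  rw [integral_cond_natCast_eq_tsum hlocalMax (measurable_sInf_localMinSet hmeas),
    measure_localMax hmeas hindep hlaw,
    tsum_measure_localMax_inter_lt_sInf_localMinSet hmeas hindep hlaw]
  norm_num
end

section
/- The NIG density integrates to 1: for α > |β| ≥ 0, δ > 0, μ ∈ ℝ, ∫_ℝ (αδ/π)·K_1(αδ√(1 + ((x−μ)/δ)²))/√(δ² + (x−μ)²)·exp(δ√(α² − β²) + β(x−μ)) dx = 1. -/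
open MeasureTheory

/-- `K₁ x = (1/2) ∫₀^∞ exp (-(x/2)(y + 1/y)) dy`, the modified Bessel function of the
second kind of order one. -/
noncomputable def besselK1 (x : ℝ) : ℝ :=
  (1 / 2) * ∫ y in Set.Ioi (0 : ℝ), Real.exp (-(x / 2) * (y + 1 / y))

/-!
The NIG law is a normal variance-mean mixture. With `g = √(δ² + (x - μ)²)`, substituting
`y = g / (α s²)` in the integral defining `K₁(α g)` writes the density at `x` as
`∫_{s > 0} w(s) φ_{μ + β s², s²}(x) ds`, where `φ_{m, v}` is the Gaussian density and
`w(s) = (2δ / s²) φ_{0, 1}(δ / s - γ s)` with `γ = √(α² - β²)`. By Fubini the total mass is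
`∫ w`. The Cauchy-Schlömilch substitution `v = δ / s - γ s` has `|dv/ds| = δ / s² + γ`, and
`s ↦ δ / (γ s)` exchanges the integrals of the two terms against the even function
`φ_{0, 1}(v)`, so `∫ w = ∫ φ_{0, 1} = 1`.
-/

open Real Set ProbabilityTheory

variable {E : Type*} [NormedAddCommGroup E] [NormedSpace ℝ E]

theorem integral_Ioi_comp_div_pow (f : ℝ → E) {c : ℝ} (hc : 0 < c) {n : ℕ} (hn : n ≠ 0) :
    ∫ s in Ioi 0, (n * c / s ^ (n + 1)) • f (c / s ^ n) = ∫ y in Ioi 0, f y := by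
  have h := integral_comp_rpow_Ioi (fun y => f (c * y)) (p := -n) (by simpa using hn)
  rw [integral_comp_mul_left_Ioi f 0 hc, mul_zero] at h
  rw [← smul_inv_smul₀ hc.ne' (∫ y in Ioi 0, f y), ← h, ← integral_smul]
  refine setIntegral_congr_fun measurableSet_Ioi fun s (hs : 0 < s) => ?_
  have hn1 : -(n : ℝ) - 1 = -((n + 1 : ℕ) : ℝ) := by push_cast; ring
  rw [hn1, rpow_neg hs.le, rpow_neg hs.le, rpow_natCast, rpow_natCast, abs_neg, Nat.abs_cast,
    smul_smul]
  congr 1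
  field_simp

section CauchySchlomilch

variable {a b : ℝ}

theorem hasDerivAt_div_sub_mul {s : ℝ} (hs : s ≠ 0) :
    HasDerivAt (fun s => a / s - b * s) (-(a / s ^ 2 + b)) s := by
  have h : HasDerivAt (fun s => a * s⁻¹ - b * s) (a * -(s ^ 2)⁻¹ - b * 1) s :=
    ((hasDerivAt_inv hs).const_mul a).sub ((hasDerivAt_id' s).const_mul b)
  simp only [← div_eq_mul_inv] at h
  convert h using 1
  ring

theorem strictAntiOn_div_sub_mul (ha : 0 < a) (hb : 0 < b) :
    StrictAntiOn (fun s => a / s - b * s) (Ioi 0) := by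
  intro s (hs : 0 < s) t _ hst
  have : a / t < a / s := div_lt_div_of_pos_left ha hs hst
  simp only
  nlinarith

theorem image_Ioi_div_sub_mul (ha : 0 < a) (hb : 0 < b) :
    (fun s => a / s - b * s) '' Ioi 0 = univ := by
  refine eq_univ_of_forall fun y => ?_
  -- the positive root of `b s ^ 2 + y s - a = 0`
  set r := √(y ^ 2 + 4 * a * b)
  have hr : r ^ 2 = y ^ 2 + 4 * a * b := sq_sqrt (by positivity)
  have hry : y < r := by
    calc y ≤ |y| := le_abs_self y
      _ = √(y ^ 2) := (sqrt_sq_eq_abs y).symm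
      _ < r := sqrt_lt_sqrt (sq_nonneg y) (by nlinarith)
  refine ⟨(r - y) / (2 * b), mem_Ioi.mpr (div_pos (by linarith) (by linarith)), ?_⟩
  have : r - y ≠ 0 := by linarith
  field_simp
  linear_combination -hr

theorem integral_Ioi_comp_div_sub_mul (f : ℝ → E) (ha : 0 < a) (hb : 0 < b) :
    ∫ s in Ioi 0, (a / s ^ 2 + b) • f (a / s - b * s) = ∫ y, f y := by
  have h := integral_image_eq_integral_abs_deriv_smul measurableSet_Ioi
    (fun s (hs : 0 < s) => (hasDerivAt_div_sub_mul (a := a) (b := b) hs.ne').hasDerivWithinAt)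
    (strictAntiOn_div_sub_mul ha hb).injOn f
  rw [image_Ioi_div_sub_mul ha hb, Measure.restrict_univ] at h
  rw [h]
  refine setIntegral_congr_fun measurableSet_Ioi fun s (hs : 0 < s) => ?_
  rw [abs_neg, abs_of_pos (by positivity)]

theorem integrableOn_Ioi_comp_div_sub_mul_iff (f : ℝ → E) (ha : 0 < a) (hb : 0 < b) :
    IntegrableOn (fun s => (a / s ^ 2 + b) • f (a / s - b * s)) (Ioi 0) ↔ Integrable f := by
  have h := integrableOn_image_iff_integrableOn_abs_deriv_smul measurableSet_Ioi
    (fun s (hs : 0 < s) => (hasDerivAt_div_sub_mul (a := a) (b := b) hs.ne').hasDerivWithinAt)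
    (strictAntiOn_div_sub_mul ha hb).injOn f
  rw [image_Ioi_div_sub_mul ha hb, integrableOn_univ] at h
  rw [h]
  refine integrableOn_congr_fun (fun s (hs : 0 < s) => ?_) measurableSet_Ioi
  rw [abs_neg, abs_of_pos (by positivity)]

theorem integrableOn_Ioi_smul_comp_div_sub_mul {f : ℝ → E} (hf : Integrable f) (ha : 0 < a)
    (hb : 0 < b) {g : ℝ → ℝ} (hg : Measurable g) (hg_le : ∀ s, 0 < s → |g s| ≤ a / s ^ 2 + b) :
    IntegrableOn (fun s => g s • f (a / s - b * s)) (Ioi 0) := by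
  have h := ((integrableOn_Ioi_comp_div_sub_mul_iff f ha hb).2 hf).bdd_smul 1
    (φ := fun s => g s / (a / s ^ 2 + b)) (by fun_prop : Measurable _).aestronglyMeasurable
    ((ae_restrict_iff' measurableSet_Ioi).2 (.of_forall fun s (hs : 0 < s) => ?_))
  · refine IntegrableOn.congr_fun h (fun s (hs : 0 < s) => ?_) measurableSet_Ioi
    have : a / s ^ 2 + b ≠ 0 := by positivity
    simp only [Pi.smul_apply', smul_smul, div_mul_cancel₀ _ this]
  · rw [norm_div, Real.norm_eq_abs, Real.norm_of_nonneg (by positivity)]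
    exact div_le_one_of_le₀ (hg_le s hs) (by positivity)

theorem integrableOn_Ioi_div_sq_smul_comp_div_sub_mul {f : ℝ → E} (hf : Integrable f)
    (ha : 0 < a) (hb : 0 < b) :
    IntegrableOn (fun s => (a / s ^ 2) • f (a / s - b * s)) (Ioi 0) :=
  integrableOn_Ioi_smul_comp_div_sub_mul hf ha hb (by fun_prop) fun s hs => by
    rw [abs_of_pos (by positivity)]; linarith

theorem integral_Ioi_div_sq_smul_comp_div_sub_mul {f : ℝ → E} (hf : Integrable f)
    (hf_even : ∀ y, f (-y) = f y) (ha : 0 < a) (hb : 0 < b) :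
    ∫ s in Ioi 0, (a / s ^ 2) • f (a / s - b * s) = (2 : ℝ)⁻¹ • ∫ y, f y := by
  have hswap : ∫ s in Ioi 0, b • f (a / s - b * s) =
      ∫ s in Ioi 0, (a / s ^ 2) • f (a / s - b * s) := by
    rw [← integral_Ioi_comp_div_pow (fun s => b • f (a / s - b * s)) (div_pos ha hb) one_ne_zero]
    refine setIntegral_congr_fun measurableSet_Ioi fun s (hs : 0 < s) => ?_
    have harg : a / (a / b / s ^ 1) - b * (a / b / s ^ 1) = -(a / s - b * s) := by
      field_simp
      ring
    rw [harg, hf_even, smul_smul]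
    congr 1
    field_simp
    ring
  have hconst : IntegrableOn (fun s => b • f (a / s - b * s)) (Ioi 0) :=
    integrableOn_Ioi_smul_comp_div_sub_mul hf ha hb (by fun_prop) fun s hs => by
      rw [abs_of_pos hb]; linarith [show 0 < a / s ^ 2 by positivity]
  have h := integral_Ioi_comp_div_sub_mul f ha hb
  simp only [add_smul] at h
  rw [integral_add (integrableOn_Ioi_div_sq_smul_comp_div_sub_mul hf ha hb) hconst, hswap,
    ← two_smul ℝ] at h
  rw [← h, smul_smul, inv_mul_cancel₀ two_ne_zero, one_smul]

end CauchySchlomilch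

theorem besselK1_mul_eq_integral {a g : ℝ} (ha : 0 < a) (hg : 0 < g) :
    besselK1 (a * g) =
      ∫ s in Ioi 0, g / (a * s ^ 3) * exp (-(g ^ 2 / (2 * s ^ 2)) - a ^ 2 * s ^ 2 / 2) := by
  rw [besselK1, ← integral_Ioi_comp_div_pow _ (div_pos hg ha) two_ne_zero, ← integral_const_mul]
  refine setIntegral_congr_fun measurableSet_Ioi fun s (hs : 0 < s) => ?_
  have hexp : -(a * g / 2) * (g / a / s ^ 2 + 1 / (g / a / s ^ 2)) =
      -(g ^ 2 / (2 * s ^ 2)) - a ^ 2 * s ^ 2 / 2 := by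
    field_simp
    ring
  rw [smul_eq_mul, hexp]
  field_simp
  norm_num

noncomputable def nigDensity (α β δ μ x : ℝ) : ℝ :=
  α * δ / π * besselK1 (α * δ * √(1 + ((x - μ) / δ) ^ 2)) / √(δ ^ 2 + (x - μ) ^ 2) *
    exp (δ * √(α ^ 2 - β ^ 2) + β * (x - μ))

theorem nigDensity_eq_integral_gaussianPDFReal {α β δ : ℝ} (hα : |β| < α) (hδ : 0 < δ)
    (μ x : ℝ) :
    nigDensity α β δ μ x =
      ∫ s in Ioi 0, 2 * δ / s ^ 2 * gaussianPDFReal 0 1 (δ / s - √(α ^ 2 - β ^ 2) * s) *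
        gaussianPDFReal (μ + β * s ^ 2) (s ^ 2).toNNReal x := by
  have hα0 : 0 < α := (abs_nonneg β).trans_lt hα
  have hγ : √(α ^ 2 - β ^ 2) ^ 2 = α ^ 2 - β ^ 2 :=
    sq_sqrt (by nlinarith [sq_abs β, abs_nonneg β])
  have hg : 0 < √(δ ^ 2 + (x - μ) ^ 2) := sqrt_pos.2 (by positivity)
  have hg2 : √(δ ^ 2 + (x - μ) ^ 2) ^ 2 = δ ^ 2 + (x - μ) ^ 2 := sq_sqrt (by positivity)
  have hscale : α * δ * √(1 + ((x - μ) / δ) ^ 2) = α * √(δ ^ 2 + (x - μ) ^ 2) := by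
    rw [mul_assoc, ← sqrt_sq hδ.le, ← sqrt_mul (sq_nonneg δ), sqrt_sq hδ.le]
    congr 2
    field_simp
  rw [nigDensity, hscale, besselK1_mul_eq_integral hα0 hg]
  set γ := √(α ^ 2 - β ^ 2)
  set g := √(δ ^ 2 + (x - μ) ^ 2)
  rw [show ∀ I : ℝ, α * δ / π * I / g * exp (δ * γ + β * (x - μ)) =
    (α * δ / π / g * exp (δ * γ + β * (x - μ))) * I from fun I => by ring, ← integral_const_mul]
  refine setIntegral_congr_fun measurableSet_Ioi fun s (hs : 0 < s) => ?_
  have hexp : δ * γ + β * (x - μ) + (-(g ^ 2 / (2 * s ^ 2)) - α ^ 2 * s ^ 2 / 2) =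
      -(δ / s - γ * s - 0) ^ 2 / (2 * 1) + -(x - (μ + β * s ^ 2)) ^ 2 / (2 * s ^ 2) := by
    rw [hg2]
    field_simp
    linear_combination s ^ 4 * hγ
  calc _ = δ / (π * s ^ 3) * (exp (δ * γ + β * (x - μ)) *
        exp (-(g ^ 2 / (2 * s ^ 2)) - α ^ 2 * s ^ 2 / 2)) := by
        field_simp
    _ = δ / (π * s ^ 3) * (exp (-(δ / s - γ * s - 0) ^ 2 / (2 * 1)) *
        exp (-(x - (μ + β * s ^ 2)) ^ 2 / (2 * s ^ 2))) := by
        rw [← exp_add, hexp, exp_add]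
    _ = _ := by
        simp only [gaussianPDFReal, Real.coe_toNNReal _ (sq_nonneg s), NNReal.coe_one]
        rw [sqrt_mul (by positivity : (0 : ℝ) ≤ 2 * π) (s ^ 2), sqrt_sq hs.le, mul_one]
        field_simp
        exact sq_sqrt (by positivity)

theorem integral_integral_mul_eq_integral_of_integral_eq_one {X S : Type*} [MeasurableSpace X]
    [MeasurableSpace S] {μ : Measure X} {ν : Measure S} [SFinite μ] [SFinite ν] {w : S → ℝ}
    {p : S → X → ℝ} (hwp : AEStronglyMeasurable (fun z : X × S => w z.2 * p z.2 z.1) (μ.prod ν))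
    (hw : Integrable w ν) (hp_nonneg : ∀ᵐ s ∂ν, 0 ≤ᵐ[μ] p s)
    (hp_one : ∀ᵐ s ∂ν, ∫ x, p s x ∂μ = 1) :
    ∫ x, ∫ s, w s * p s x ∂ν ∂μ = ∫ s, w s ∂ν := by
  have hint : Integrable (Function.uncurry fun x s => w s * p s x) (μ.prod ν) := by
    refine (integrable_prod_iff' hwp).2 ⟨?_, hw.norm.congr ?_⟩
    · filter_upwards [hp_one] with s hs
      exact (Integrable.of_integral_ne_zero (by rw [hs]; exact one_ne_zero)).const_mul (w s)
    · filter_upwards [hp_nonneg, hp_one] with s hs0 hs1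
      calc ‖w s‖ = ‖w s‖ * ∫ x, p s x ∂μ := by rw [hs1, mul_one]
        _ = ∫ x, ‖w s * p s x‖ ∂μ := by
          rw [← integral_const_mul]
          refine integral_congr_ae ?_
          filter_upwards [hs0] with x hx
          rw [norm_mul, Real.norm_of_nonneg hx]
  rw [integral_integral_swap hint]
  refine integral_congr_ae ?_
  filter_upwards [hp_one] with s hs
  rw [integral_const_mul, hs, mul_one]

/-- The NIG density integrates to one: for `α > |β| ≥ 0`, `δ > 0`, `μ ∈ ℝ`,
`∫ (αδ/π) K₁(αδ√(1 + ((x-μ)/δ)²))/√(δ² + (x-μ)²) · exp(δ√(α² - β²) + β(x-μ)) dx = 1`. -/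
theorem nig_density_integral_eq_one
    (α β δ μ : ℝ) (hα : |β| < α) (hδ : 0 < δ) :
    ∫ x : ℝ,
      (α * δ / Real.pi) *
        besselK1 (α * δ * Real.sqrt (1 + ((x - μ) / δ) ^ 2)) /
          Real.sqrt (δ ^ 2 + (x - μ) ^ 2) *
        Real.exp (δ * Real.sqrt (α ^ 2 - β ^ 2) + β * (x - μ)) = 1 := by
  have hγ : 0 < √(α ^ 2 - β ^ 2) := sqrt_pos.2 (by nlinarith [sq_abs β, abs_nonneg β])
  have hφ : Integrable (gaussianPDFReal 0 1) := integrable_gaussianPDFReal 0 1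
  have hφ_even : ∀ y, gaussianPDFReal 0 1 (-y) = gaussianPDFReal 0 1 y := fun y => by
    simp [gaussianPDFReal]
  have hweight : ∀ s, 2 * δ / s ^ 2 * gaussianPDFReal 0 1 (δ / s - √(α ^ 2 - β ^ 2) * s) =
      2 * ((δ / s ^ 2) • gaussianPDFReal 0 1 (δ / s - √(α ^ 2 - β ^ 2) * s)) := fun s => by
    rw [smul_eq_mul]; ring
  change ∫ x, nigDensity α β δ μ x = 1
  simp_rw [nigDensity_eq_integral_gaussianPDFReal hα hδ μ]
  rw [integral_integral_mul_eq_integral_of_integral_eq_one]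
  · simp_rw [hweight]
    rw [integral_const_mul, integral_Ioi_div_sq_smul_comp_div_sub_mul hφ hφ_even hδ hγ,
      integral_gaussianPDFReal_eq_one 0 one_ne_zero]
    norm_num
  · apply Measurable.aestronglyMeasurable
    simp only [gaussianPDFReal]
    fun_prop
  · simp_rw [hweight]
    exact (integrableOn_Ioi_div_sq_smul_comp_div_sub_mul hφ hδ hγ).const_mul 2
  · exact ae_of_all _ fun s => ae_of_all _ (gaussianPDFReal_nonneg _ _)
  · filter_upwards [ae_restrict_mem measurableSet_Ioi] with s (hs : 0 < s)
    exact integral_gaussianPDFReal_eq_one _ (by simp [hs.ne'])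
end

section
/- For the Samuelson model increments X_k = x_k i.i.d. N(a, σ²), the normalized range R(n)/S(n) satisfies R(n)/(σ√n) converges in distribution as n → ∞ to the range of a Brownian bridge, max_{0≤t≤1}(B_t − tB_1) − min_{0≤t≤1}(B_t − tB_1); in particular the Hurst exponent in R/S analysis equals 1/2. -/
open MeasureTheory ProbabilityTheory Filter



private lemma rs_iInf_eq_neg_iSup {ι : Sort*} (f : ι → ℝ) : ⨅ i, f i = -⨆ i, -f i := by
  have h := Real.iInf_mul_of_nonpos (r := (-1:ℝ)) (by norm_num) f
  simp only [mul_neg_one] at h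
  linarith

private lemma rs_tendsto_gridSup {g : ℝ → ℝ} (hg : Continuous g) :
    Tendsto (fun n : ℕ => ⨆ k : Fin n, g (k / n)) atTop
      (nhds (⨆ t : Set.Icc (0:ℝ) 1, g t)) := by
  obtain ⟨t₀, ht₀, hmax⟩ := isCompact_Icc.exists_isMaxOn (Set.nonempty_Icc.2 zero_le_one)
    hg.continuousOn
  have hmax' : ∀ t ∈ Set.Icc (0:ℝ) 1, g t ≤ g t₀ := hmax
  have hSup : (⨆ t : Set.Icc (0:ℝ) 1, g t) = g t₀ := by
    apply le_antisymm
    · exact ciSup_le fun t => hmax' t t.2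
    · exact le_ciSup_of_le ⟨g t₀, by rintro x ⟨t, rfl⟩; exact hmax' t t.2⟩ ⟨t₀, ht₀⟩ le_rfl
  rw [hSup, Metric.tendsto_atTop]
  intro ε hε
  obtain ⟨t₁, ht₁, hgt₁⟩ : ∃ t₁, t₁ ∈ Set.Ico (0:ℝ) 1 ∧ g t₀ - ε/2 < g t₁ := by
    rcases lt_or_eq_of_le ht₀.2 with h1 | h1
    · exact ⟨t₀, ⟨ht₀.1, h1⟩, by linarith⟩
    · have hc : ContinuousAt g 1 := hg.continuousAt
      rcases Metric.continuousAt_iff.1 hc (ε/2) (by linarith) with ⟨δ, hδ, hδ'⟩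
      have hmin : 0 < min δ 1 := lt_min hδ one_pos
      refine ⟨1 - min δ 1 / 2, ⟨by nlinarith [min_le_right δ 1], by linarith⟩, ?_⟩
      have hdist : dist (1 - min δ 1 / 2) 1 < δ := by
        rw [Real.dist_eq]
        rw [abs_of_nonpos (by linarith)]
        have := min_le_left δ 1
        linarith
      have := hδ' hdist
      rw [Real.dist_eq, abs_lt] at this
      rw [h1]
      linarith [this.1]
  have hct₁ : ContinuousAt g t₁ := hg.continuousAt
  obtain ⟨δ₂, hδ₂, hδ₂'⟩ := Metric.continuousAt_iff.1 hct₁ (ε/2) (by linarith)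
  obtain ⟨N, hN⟩ := exists_nat_gt (1 / δ₂)
  refine ⟨max N 1, fun n hn => ?_⟩
  have hn1 : 1 ≤ n := le_trans (le_max_right N 1) hn
  have hnpos : (0:ℝ) < n := by exact_mod_cast hn1
  have hNn : (1:ℝ)/δ₂ < n := lt_of_lt_of_le hN (by exact_mod_cast le_trans (le_max_left N 1) hn)
  have hinv : 1 / (n:ℝ) < δ₂ := by
    rw [div_lt_iff₀ hnpos]
    rw [div_lt_iff₀ hδ₂] at hNn
    nlinarith
  have hnt₁ : (0:ℝ) ≤ (n:ℝ) * t₁ := mul_nonneg hnpos.le ht₁.1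
  set k : ℕ := ⌊(n:ℝ) * t₁⌋₊ with hk
  have hk1 : (k:ℝ) ≤ (n:ℝ) * t₁ := Nat.floor_le hnt₁
  have hk2 : (n:ℝ) * t₁ < k + 1 := Nat.lt_floor_add_one _
  have hkn : k < n := by
    rw [hk, Nat.floor_lt hnt₁]
    exact mul_lt_of_lt_one_right hnpos ht₁.2
  haveI : Nonempty (Fin n) := Fin.pos_iff_nonempty.1 hn1
  have hle : (k:ℝ)/n ≤ t₁ := by rw [div_le_iff₀ hnpos]; linarith
  have hlt : t₁ - (k:ℝ)/n < δ₂ := by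
    have h3 : t₁ - (k:ℝ)/n < 1/(n:ℝ) := by
      rw [sub_lt_iff_lt_add, ← add_div, lt_div_iff₀ hnpos]
      nlinarith
    linarith
  have hgrid : dist ((k:ℝ)/n) t₁ < δ₂ := by
    rw [Real.dist_eq, abs_lt]
    constructor <;> linarith
  have hgk : g t₀ - ε < g ((k:ℝ)/n) := by
    have := hδ₂' hgrid
    rw [Real.dist_eq, abs_lt] at this
    linarith [this.1]
  have hub : (⨆ j : Fin n, g ((j:ℝ) / n)) ≤ g t₀ := by
    apply ciSup_le
    intro j
    apply hmax'
    constructor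
    · positivity
    · have : ((j:ℕ):ℝ) < n := by exact_mod_cast j.2
      exact le_of_lt ((div_lt_one hnpos).2 this)
  have hlb : g ((k:ℝ)/n) ≤ ⨆ j : Fin n, g ((j:ℝ) / n) := by
    have := le_ciSup (f := fun j : Fin n => g ((j:ℝ)/n))
      (Set.Finite.bddAbove (Set.finite_range _)) ⟨k, hkn⟩
    simpa using this
  rw [Real.dist_eq, abs_lt]
  constructor <;> [linarith; linarith]

private lemma rs_tendsto_gridInf {g : ℝ → ℝ} (hg : Continuous g) :
    Tendsto (fun n : ℕ => ⨅ k : Fin n, g (k / n)) atTop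
      (nhds (⨅ t : Set.Icc (0:ℝ) 1, g t)) := by
  have h := (rs_tendsto_gridSup (g := fun t => -g t) (hg.neg)).neg
  simp only [← rs_iInf_eq_neg_iSup] at h
  exact h


private lemma rs_indep_restrict {Ω : Type*} [MeasurableSpace Ω] {μ : Measure Ω}
    {f : ℕ → Ω → ℝ} (h : iIndepFun f μ) (n : ℕ) :
    iIndepFun (fun i : Fin n => f i) μ := by
  rw [iIndepFun_iff_measure_inter_preimage_eq_mul] at h ⊢
  intro S sets hsets
  classical
  set sets' : ℕ → Set ℝ := fun i => if h : i < n then sets ⟨i, h⟩ else Set.univ with hsets'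
  have hms : ∀ i ∈ S.image Fin.val, MeasurableSet (sets' i) := by
    intro i hi
    simp only [Finset.mem_image] at hi
    obtain ⟨j, hj, rfl⟩ := hi
    simpa [hsets', j.isLt] using hsets j hj
  have key := h (S.image Fin.val) hms
  have hinj : ∀ x ∈ S, ∀ y ∈ S, Fin.val x = Fin.val y → x = y := fun x _ y _ hxy =>
    Fin.val_injective hxy
  have h1 : (⋂ i ∈ S.image Fin.val, f i ⁻¹' sets' i) = ⋂ j ∈ S, f j ⁻¹' sets j := by
    rw [Finset.set_biInter_finset_image]
    apply Set.iInter_congr; intro j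
    apply Set.iInter_congr; intro hj
    simp [hsets', j.isLt]
  have h2 : (∏ i ∈ S.image Fin.val, μ (f i ⁻¹' sets' i)) = ∏ j ∈ S, μ (f j ⁻¹' sets j) := by
    rw [Finset.prod_image hinj]
    apply Finset.prod_congr rfl
    intro j _
    simp [hsets', j.isLt]
  rw [← h1, ← h2]
  exact key

private lemma rs_joint_law {Ω : Type*} [MeasurableSpace Ω] {μ : Measure Ω}
    [IsProbabilityMeasure μ] {n : ℕ} {g : Fin n → Ω → ℝ} (hgm : ∀ i, Measurable (g i))
    (hind : iIndepFun g μ)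
    {ν : Fin n → Measure ℝ} [∀ i, IsProbabilityMeasure (ν i)]
    (hlaw : ∀ i, μ.map (g i) = ν i) :
    μ.map (fun ω i => g i ω) = Measure.pi ν := by
  refine (Measure.pi_eq fun s hs => ?_).symm
  rw [Measure.map_apply (measurable_pi_lambda _ hgm) (MeasurableSet.univ_pi hs)]
  have hpre : (fun ω i => g i ω) ⁻¹' Set.pi Set.univ s = ⋂ i, g i ⁻¹' s i := by
    ext ω; simp [Set.mem_univ_pi]
  rw [hpre, hind.meas_iInter (fun i => ⟨s i, hs i, rfl⟩)]
  exact Finset.prod_congr rfl fun i _ => by rw [← hlaw i, Measure.map_apply (hgm i) (hs i)]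

/-- For i.i.d. increments `X k ~ N(a, σ²)` with partial sums `S k = X 0 + ⋯ + X (k-1)` and
range `R n = max_{k<n} (S k - (k/n) S n) - min_{k<n} (S k - (k/n) S n)`, the normalized
range `R n / (σ √n)` converges in distribution, as `n → ∞`, to the range
`max_{0≤t≤1} (B t - t B 1) - min_{0≤t≤1} (B t - t B 1)` of a Brownian bridge, where `B` is
a standard Brownian motion on `[0,1]`; this expresses that the Hurst exponent of the R/S
statistic equals `1/2`. -/
theorem range_over_sigma_sqrt_tendsto_brownian_bridge_range
    {Ω : Type*} [MeasurableSpace Ω] (P : Measure Ω) [IsProbabilityMeasure P]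
    (a σ : ℝ) (hσ : 0 < σ)
    (X : ℕ → Ω → ℝ) (hmeas : ∀ i, Measurable (X i))
    (hindep : iIndepFun X P)
    (hlaw : ∀ i, P.map (X i) = gaussianReal a ⟨σ ^ 2, sq_nonneg σ⟩)
    (S : ℕ → Ω → ℝ) (hS : ∀ k ω, S k ω = ∑ j ∈ Finset.range k, X j ω)
    (R : ℕ → Ω → ℝ)
    (hR : ∀ n ω, R n ω =
      (⨆ k : Fin n, (S k ω - (k : ℝ) / n * S n ω)) -
        ⨅ k : Fin n, (S k ω - (k : ℝ) / n * S n ω))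
    {Ω' : Type*} [MeasurableSpace Ω'] (P' : Measure Ω') [IsProbabilityMeasure P']
    (B : ℝ → Ω' → ℝ) (hBmeas : ∀ t, Measurable (B t))
    (hB0 : ∀ ω, B 0 ω = 0)
    (hBcont : ∀ ω, Continuous fun t => B t ω)
    (hBindep : ∀ (n : ℕ) (t : ℕ → ℝ), Monotone t →
      iIndepFun
        (fun i : Fin n => fun ω => B (t (i + 1)) ω - B (t i) ω) P')
    (hBgauss : ∀ s t : ℝ, 0 ≤ s → s ≤ t →
      P'.map (fun ω => B t ω - B s ω) = gaussianReal 0 (Real.toNNReal (t - s)))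
    (M : Ω' → ℝ)
    (hM : ∀ ω, M ω =
      (⨆ t : Set.Icc (0 : ℝ) 1, (B t ω - (t : ℝ) * B 1 ω)) -
        ⨅ t : Set.Icc (0 : ℝ) 1, (B t ω - (t : ℝ) * B 1 ω)) :
    ∀ f : BoundedContinuousFunction ℝ ℝ,
      Filter.Tendsto (fun n => ∫ ω, f (R n ω / (σ * Real.sqrt n)) ∂P)
        Filter.atTop (nhds (∫ ω, f (M ω) ∂P')) := by
  intro f
  -- the discrete bridge range of the Brownian motion
  set D : ℕ → Ω' → ℝ := fun n ω =>
    (⨆ k : Fin n, (B ((k : ℝ) / n) ω - (k : ℝ) / n * B 1 ω)) -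
      ⨅ k : Fin n, (B ((k : ℝ) / n) ω - (k : ℝ) / n * B 1 ω) with hD
  have hDmeas : ∀ n, Measurable (D n) := by
    intro n
    apply Measurable.sub
    · exact Measurable.iSup fun k => (hBmeas _).sub ((hBmeas 1).const_mul _)
    · exact Measurable.iInf fun k => (hBmeas _).sub ((hBmeas 1).const_mul _)
  -- pointwise convergence of D to M
  have hlim : ∀ ω, Tendsto (fun n => D n ω) atTop (nhds (M ω)) := by
    intro ω
    have hg : Continuous fun t : ℝ => B t ω - t * B 1 ω :=
      (hBcont ω).sub (continuous_id.mul continuous_const)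
    have h1 := (rs_tendsto_gridSup hg).sub (rs_tendsto_gridInf hg)
    rw [hM ω]
    exact h1
  -- dominated convergence
  have h2 : Tendsto (fun n => ∫ ω, f (D n ω) ∂P') atTop (nhds (∫ ω, f (M ω) ∂P')) := by
    apply tendsto_integral_of_dominated_convergence (fun _ => ‖f‖)
    · exact fun n => (f.continuous.measurable.comp (hDmeas n)).aestronglyMeasurable
    · exact integrable_const _
    · exact fun n => Filter.Eventually.of_forall fun ω => f.norm_coe_le_norm _
    · exact Filter.Eventually.of_forall fun ω => (f.continuous.tendsto _).comp (hlim ω)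
  -- equality of the laws for each fixed n ≥ 1
  have key : ∀ n : ℕ, 1 ≤ n →
      ∫ ω, f (R n ω / (σ * Real.sqrt n)) ∂P = ∫ ω, f (D n ω) ∂P' := by
    intro n hn
    classical
    have hnpos : (0:ℝ) < n := by exact_mod_cast hn
    have hn0 : (n:ℝ) ≠ 0 := ne_of_gt hnpos
    set c : ℝ := σ * Real.sqrt n with hcdef
    have hc : 0 < c := mul_pos hσ (Real.sqrt_pos.2 hnpos)
    set t : ℕ → ℝ := fun k => (k : ℝ) / n with ht
    have hmono : Monotone t := by
      intro i j hij
      have hij' : (i:ℝ) ≤ j := by exact_mod_cast hij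
      simp only [ht]
      gcongr
    set Y : Fin n → Ω' → ℝ := fun i ω => c * (B (t (i + 1)) ω - B (t i) ω) + a with hYdef
    have hYmeas : ∀ i, Measurable (Y i) := fun i =>
      (((hBmeas _).sub (hBmeas _)).const_mul c).add_const a
    have hYindep : iIndepFun Y P' := by
      have h := (hBindep n t hmono).comp (fun _ => fun x : ℝ => c * x + a)
        (fun _ => (measurable_id.const_mul c).add_const a)
      exact h
    have hYlaw : ∀ i, P'.map (Y i) = gaussianReal a ⟨σ ^ 2, sq_nonneg σ⟩ := by
      intro i
      have hZm : Measurable fun ω => B (t (i + 1)) ω - B (t i) ω := (hBmeas _).sub (hBmeas _)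
      have h0 : P'.map (fun ω => B (t (i + 1)) ω - B (t i) ω)
          = gaussianReal 0 (Real.toNNReal (1 / n)) := by
        have hts : t (i + 1) - t i = 1 / n := by
          simp only [ht]
          push_cast
          field_simp
          ring
        rw [hBgauss (t i) (t (i + 1)) (by simp only [ht]; positivity) (hmono (Nat.le_succ _)),
          hts]
      have hcomp : Y i = (fun x => x + a) ∘ ((fun x => c * x) ∘
          (fun ω => B (t (i + 1)) ω - B (t i) ω)) := rfl
      rw [hcomp, ← Measure.map_map (by fun_prop : Measurable fun x : ℝ => x + a)
          ((by fun_prop : Measurable fun x : ℝ => c * x).comp hZm),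
        ← Measure.map_map (by fun_prop : Measurable fun x : ℝ => c * x) hZm, h0,
        gaussianReal_map_const_mul, gaussianReal_map_add_const, mul_zero, zero_add]
      congr 1
      apply NNReal.coe_injective
      rw [NNReal.coe_mul]
      rw [Real.coe_toNNReal _ (by positivity : (0:ℝ) ≤ 1 / (n:ℝ))]
      show c ^ 2 * (1 / (n:ℝ)) = σ ^ 2
      rw [hcdef, mul_pow, Real.sq_sqrt hnpos.le]
      field_simp
    have hjX : P.map (fun ω (i : Fin n) => X i ω)
        = Measure.pi (fun _ : Fin n => gaussianReal a ⟨σ ^ 2, sq_nonneg σ⟩) :=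
      @rs_joint_law _ _ _ _ _ _ (fun i => hmeas i) (rs_indep_restrict hindep n) _
        (fun _ => instIsProbabilityMeasureGaussianReal _ _) (fun i => hlaw i)
    have hjY : P'.map (fun ω (i : Fin n) => Y i ω)
        = Measure.pi (fun _ : Fin n => gaussianReal a ⟨σ ^ 2, sq_nonneg σ⟩) :=
      @rs_joint_law _ _ _ _ _ _ hYmeas hYindep _
        (fun _ => instIsProbabilityMeasureGaussianReal _ _) hYlaw
    set ps : (Fin n → ℝ) → ℕ → ℝ :=
      fun x k => ∑ j ∈ Finset.range k, (if h : j < n then x ⟨j, h⟩ else 0) with hpsdef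
    set Φ : (Fin n → ℝ) → ℝ := fun x =>
      ((⨆ k : Fin n, (ps x k - (k : ℝ) / n * ps x n)) -
        ⨅ k : Fin n, (ps x k - (k : ℝ) / n * ps x n)) / c with hΦdef
    have hpsm : ∀ k, Measurable fun x : Fin n → ℝ => ps x k := by
      intro k
      apply Finset.measurable_sum
      intro j _
      by_cases h : j < n
      · simpa [h] using measurable_pi_apply (⟨j, h⟩ : Fin n)
      · simp only [h, dif_neg, not_false_iff]
        exact measurable_const
    have hΦm : Measurable Φ := by
      apply Measurable.div_const
      apply Measurable.sub
      · exact Measurable.iSup fun k => (hpsm _).sub ((hpsm n).const_mul _)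
      · exact Measurable.iInf fun k => (hpsm _).sub ((hpsm n).const_mul _)
    have hpsX : ∀ ω, ∀ k : ℕ, k ≤ n → ps (fun i : Fin n => X i ω) k = S k ω := by
      intro ω k hk
      rw [hS]
      apply Finset.sum_congr rfl
      intro j hj
      rw [Finset.mem_range] at hj
      rw [dif_pos (lt_of_lt_of_le hj hk)]
    have eqX : ∀ ω, R n ω / c = Φ (fun i => X i ω) := by
      intro ω
      rw [hR, hΦdef]
      have h1 : (fun k : Fin n => ps (fun i : Fin n => X i ω) ↑k
            - (↑k : ℝ) / ↑n * ps (fun i : Fin n => X i ω) n)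
          = fun k : Fin n => S ↑k ω - (↑k : ℝ) / ↑n * S n ω := by
        funext k
        rw [hpsX ω ↑k (le_of_lt k.isLt), hpsX ω n le_rfl]
      simp only [h1]
    have hpsY : ∀ ω, ∀ k : ℕ, k ≤ n →
        ps (fun i : Fin n => Y i ω) k = c * B ((k : ℝ) / n) ω + k * a := by
      intro ω k hk
      have h1 : ps (fun i : Fin n => Y i ω) k
          = ∑ j ∈ Finset.range k,
              (c * ((fun m : ℕ => B ((m : ℝ) / n) ω) (j + 1)
                - (fun m : ℕ => B ((m : ℝ) / n) ω) j) + a) := by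
        apply Finset.sum_congr rfl
        intro j hj
        rw [Finset.mem_range] at hj
        rw [dif_pos (lt_of_lt_of_le hj hk)]
      rw [h1, Finset.sum_add_distrib, Finset.sum_const, ← Finset.mul_sum,
        Finset.sum_range_sub (f := fun m : ℕ => B ((m : ℝ) / n) ω)]
      simp only [Nat.cast_zero, zero_div, hB0 ω, sub_zero, smul_eq_mul, nsmul_eq_mul,
        Finset.card_range]
    have eqY : ∀ ω, D n ω = Φ (fun i => Y i ω) := by
      intro ω
      have hterm : (fun k : Fin n => ps (fun i : Fin n => Y i ω) ↑k
            - (↑k : ℝ) / ↑n * ps (fun i : Fin n => Y i ω) n)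
          = fun k : Fin n => c * (B ((↑k : ℝ) / ↑n) ω - (↑k : ℝ) / ↑n * B 1 ω) := by
        funext k
        rw [hpsY ω ↑k (le_of_lt k.isLt), hpsY ω n le_rfl,
          show ((n : ℝ)) / n = 1 from div_self hn0]
        field_simp
        ring
      rw [hD, hΦdef]
      simp only [hterm]
      rw [← Real.mul_iSup_of_nonneg hc.le, ← Real.mul_iInf_of_nonneg hc.le]
      rw [eq_div_iff hc.ne']
      ring
    have hjmX : Measurable fun ω (i : Fin n) => X i ω :=
      measurable_pi_lambda _ fun i => hmeas i
    have hjmY : Measurable fun ω (i : Fin n) => Y i ω :=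
      measurable_pi_lambda _ fun i => hYmeas i
    have hfm : AEStronglyMeasurable (fun x : Fin n → ℝ => f (Φ x))
        (Measure.pi (fun _ : Fin n => gaussianReal a ⟨σ ^ 2, sq_nonneg σ⟩)) :=
      (f.continuous.measurable.comp hΦm).aestronglyMeasurable
    calc ∫ ω, f (R n ω / c) ∂P
        = ∫ ω, f (Φ (fun i => X i ω)) ∂P := by
          apply integral_congr_ae
          exact Filter.Eventually.of_forall fun ω => congrArg f (eqX ω)
      _ = ∫ x, f (Φ x) ∂(P.map (fun ω (i : Fin n) => X i ω)) := by
          rw [integral_map (Measurable.aemeasurable hjmX) (by rw [hjX]; exact hfm)]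
      _ = ∫ x, f (Φ x) ∂(P'.map (fun ω (i : Fin n) => Y i ω)) := by rw [hjX, hjY]
      _ = ∫ ω, f (Φ (fun i => Y i ω)) ∂P' :=
          integral_map (Measurable.aemeasurable hjmY) (by rw [hjY]; exact hfm)
      _ = ∫ ω, f (D n ω) ∂P' := by
          apply integral_congr_ae
          exact Filter.Eventually.of_forall fun ω => congrArg f (eqY ω).symm
  apply h2.congr'
  filter_upwards [eventually_ge_atTop 1] with n hn
  exact (key n hn).symm
end
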